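/- arXiv:1806.06257 — 3 statements merged into one kernel-verified Lean document; each statement's English description precedes it below -/
import Mathlib

section
/- Let s_h, s_l, s_z be independent random vectors in {0,1}^n whose coordinates are independent Bernoulli random variables with parameters p_h, p_l, p_z respectively, with p_h > p_l > 1/2 and p_z > 1/2. Let d denote Hamming distance. Then Pr(d(s_h, s_z) ≥ d(s_l, s_z)) ≤ exp(-n (p_h - p_l)² (2p_z - 1)² / 2). -/
/-- Probability weight of a binary answer under competence `p`. -/
noncomputable def wt (p : ℝ) (b : Bool) : ℝ := if b then p else 1 - p

/-- Probability weight of a vector of independent binary answers, each correct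
with probability `p`. -/
noncomputable def wtv {n : ℕ} (p : ℝ) (x : Fin n → Bool) : ℝ := ∏ i, wt p (x i)

/-- Indicator (as a real number) that two booleans differ. -/
noncomputable def chi (a c : Bool) : ℝ := if a ≠ c then 1 else 0

/-- The per-coordinate weight used in the Chernoff argument. -/
noncomputable def fco (ph pl pz t : ℝ) (p : Bool × Bool × Bool) : ℝ :=
  wt ph p.1 * wt pl p.2.1 * wt pz p.2.2 *
    Real.exp (t * (chi p.1 p.2.2 - chi p.2.1 p.2.2))

lemma core (t : ℝ) (ht0 : 0 ≤ t) (ht : t ≤ 1/2) :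
    (1-t) * Real.exp t + (1+t) * Real.exp (-t) ≤ 2 - t^2 := by
  set E := Real.exp t with hE
  set E' := Real.exp (-t) with hE'
  have hEpos : 0 < E := Real.exp_pos t
  have hEE : E * E' = 1 := by rw [hE, hE', ← Real.exp_add]; simp
  have h1 : 1 + t ≤ E := by linarith [Real.add_one_le_exp t]
  have h2 : 1 - t ≤ E' := by linarith [Real.add_one_le_exp (-t)]
  have h3 : (1-t) * E ≤ 1 := by nlinarith
  have hfac : (E - (1+t)) * ((1-t)*E - 1) ≤ 0 :=
    mul_nonpos_of_nonneg_of_nonpos (by linarith) (by linarith)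
  have h4 : (1-t)*E^2 + (1+t) ≤ (2-t^2)*E := by nlinarith [hfac]
  nlinarith [mul_pos hEpos hEpos]

lemma keyineq (t E E' A : ℝ) (ht0 : 0 ≤ t) (ht : t ≤ 1/2) (hEpos : 0 < E)
    (hEE : E * E' = 1) (hcore : (1-t) * E + (1+t) * E' ≤ 2 - t^2)
    (hA0 : 0 ≤ A) (hA : 2*A + t ≤ 1) :
    1 - (2*A + t) + A*E + (A+t)*E' ≤ 1 - t^2/2 := by
  have hch : 0 ≤ E + E' - 2 := by nlinarith [sq_nonneg (E-1)]
  nlinarith [mul_nonneg (by linarith : (0:ℝ) ≤ 1 - (2*A+t)) hch]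

lemma coord (ph pl pz : ℝ) (hl : 1/2 < pl) (hlh : pl < ph) (hph : ph ≤ 1)
    (hz : 1/2 < pz) (hpz : pz ≤ 1) :
    ∑ p : Bool × Bool × Bool, fco ph pl pz ((ph-pl)*(2*pz-1)) p
      ≤ Real.exp (-(((ph-pl)*(2*pz-1))^2) / 2) := by
  set t := (ph-pl)*(2*pz-1) with htdef
  set A := pz*(1-ph)*pl + (1-pz)*ph*(1-pl) with hAdef
  have ht0 : 0 ≤ t := by rw [htdef]; nlinarith
  have ht : t ≤ 1/2 := by rw [htdef]; nlinarith
  have hEE : Real.exp t * Real.exp (-t) = 1 := by rw [← Real.exp_add]; simp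
  have hexp : ∑ p : Bool × Bool × Bool, fco ph pl pz t p
      = 1 - (2*A + t) + A * Real.exp t + (A + t) * Real.exp (-t) := by
    simp only [Fintype.sum_prod_type, Fintype.sum_bool, fco, wt, chi]
    norm_num
    rw [hAdef, htdef]; ring
  have hA0 : 0 ≤ A := by rw [hAdef]; nlinarith
  have hA : 2*A + t ≤ 1 := by rw [hAdef, htdef]; nlinarith
  have := keyineq t (Real.exp t) (Real.exp (-t)) A ht0 ht (Real.exp_pos t) hEE
    (core t ht0 ht) hA0 hA
  rw [hexp]
  calc _ ≤ 1 - t^2/2 := this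
    _ ≤ Real.exp (-(t^2)/2) := by linarith [Real.add_one_le_exp (-(t^2)/2)]

lemma ham_cast {n : ℕ} (x z : Fin n → Bool) :
    (hammingDist x z : ℝ) = ∑ i, chi (x i) (z i) := by
  rw [hammingDist, Finset.card_filter]
  push_cast
  simp [chi]

lemma ind_le {n : ℕ} (t : ℝ) (ht : 0 ≤ t) (x y z : Fin n → Bool) :
    (if hammingDist y z ≤ hammingDist x z then (1:ℝ) else 0)
      ≤ ∏ i, Real.exp (t * (chi (x i) (z i) - chi (y i) (z i))) := by
  rw [← Real.exp_sum]
  have hs : ∑ i, t * (chi (x i) (z i) - chi (y i) (z i))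
      = t * ((hammingDist x z : ℝ) - (hammingDist y z : ℝ)) := by
    rw [← Finset.mul_sum, Finset.sum_sub_distrib, ← ham_cast, ← ham_cast]
  rw [hs]
  split
  · next h =>
    have : (hammingDist y z : ℝ) ≤ (hammingDist x z : ℝ) := by exact_mod_cast h
    exact Real.one_le_exp (mul_nonneg ht (by linarith))
  · exact (Real.exp_pos _).le

lemma wt_nonneg {p : ℝ} (h0 : 0 ≤ p) (h1 : p ≤ 1) (b : Bool) : 0 ≤ wt p b := by
  cases b <;> simp [wt] <;> linarith

lemma tripleq {n : ℕ} (g : Bool × Bool × Bool → ℝ) :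
    ∑ x : Fin n → Bool, ∑ y : Fin n → Bool, ∑ z : Fin n → Bool,
        ∏ i, g (x i, y i, z i)
      = ∑ w : Fin n → Bool × Bool × Bool, ∏ i, g (w i) := by
  calc ∑ x : Fin n → Bool, ∑ y : Fin n → Bool, ∑ z : Fin n → Bool,
        ∏ i, g (x i, y i, z i)
      = ∑ p : (Fin n → Bool) × (Fin n → Bool) × (Fin n → Bool),
          ∏ i, g (p.1 i, p.2.1 i, p.2.2 i) := by
        rw [Fintype.sum_prod_type]
        refine Finset.sum_congr rfl fun x _ => ?_
        rw [Fintype.sum_prod_type]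
    _ = ∑ w : Fin n → Bool × Bool × Bool, ∏ i, g (w i) :=
        Fintype.sum_equiv
          ⟨fun p i => (p.1 i, p.2.1 i, p.2.2 i),
           fun w => (fun i => (w i).1, fun i => (w i).2.1, fun i => (w i).2.2),
           fun p => rfl, fun w => rfl⟩
          (fun p => ∏ i, g (p.1 i, p.2.1 i, p.2.2 i))
          (fun w => ∏ i, g (w i)) (fun p => rfl)

/-- Lemma 1: for independent answer vectors `x = s_h`, `y = s_l`, `z = s_z` with
i.i.d. Bernoulli coordinates of parameters `p_h > p_l > 1/2` and `p_z > 1/2`,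
the probability that `d(s_h, s_z) ≥ d(s_l, s_z)` (Hamming distance) is at most
`exp(-n (p_h - p_l)² (2 p_z - 1)² / 2)`. -/
theorem stmt1 (n : ℕ) (ph pl pz : ℝ) (hl : 1/2 < pl) (hlh : pl < ph) (hph : ph ≤ 1)
    (hz : 1/2 < pz) (hpz : pz ≤ 1) :
    ∑ x : Fin n → Bool, ∑ y : Fin n → Bool, ∑ z : Fin n → Bool,
      wtv ph x * wtv pl y * wtv pz z *
        (if hammingDist y z ≤ hammingDist x z then (1:ℝ) else 0)
      ≤ Real.exp (-(n * (ph - pl)^2 * (2*pz - 1)^2) / 2) := by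
  set t := (ph-pl)*(2*pz-1) with htdef
  have ht0 : 0 ≤ t := by rw [htdef]; nlinarith
  have hwh : ∀ b, 0 ≤ wt ph b := wt_nonneg (by linarith) hph
  have hwl : ∀ b, 0 ≤ wt pl b := wt_nonneg (by linarith) (by linarith)
  have hwz : ∀ b, 0 ≤ wt pz b := wt_nonneg (by linarith) hpz
  have step1 : ∑ x : Fin n → Bool, ∑ y : Fin n → Bool, ∑ z : Fin n → Bool,
      wtv ph x * wtv pl y * wtv pz z *
        (if hammingDist y z ≤ hammingDist x z then (1:ℝ) else 0)
      ≤ ∑ x : Fin n → Bool, ∑ y : Fin n → Bool, ∑ z : Fin n → Bool,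
        ∏ i, fco ph pl pz t (x i, y i, z i) := by
    refine Finset.sum_le_sum fun x _ => Finset.sum_le_sum fun y _ =>
      Finset.sum_le_sum fun z _ => ?_
    have heq : ∏ i, fco ph pl pz t (x i, y i, z i)
        = wtv ph x * wtv pl y * wtv pz z *
          ∏ i, Real.exp (t * (chi (x i) (z i) - chi (y i) (z i))) := by
      simp only [fco, wtv, ← Finset.prod_mul_distrib]
    rw [heq]
    have hnn : 0 ≤ wtv ph x * wtv pl y * wtv pz z := by
      apply mul_nonneg
      apply mul_nonneg
      all_goals exact Finset.prod_nonneg fun i _ => by first | exact hwh _ | exact hwl _ | exact hwz _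
    exact mul_le_mul_of_nonneg_left (ind_le t ht0 x y z) hnn
  have step2 : ∑ x : Fin n → Bool, ∑ y : Fin n → Bool, ∑ z : Fin n → Bool,
      ∏ i, fco ph pl pz t (x i, y i, z i)
      = (∑ p : Bool × Bool × Bool, fco ph pl pz t p)^n := by
    rw [tripleq (fco ph pl pz t), Fintype.sum_pow]
  have hfnn : 0 ≤ ∑ p : Bool × Bool × Bool, fco ph pl pz t p := by
    refine Finset.sum_nonneg fun p _ => ?_
    have : 0 ≤ wt ph p.1 * wt pl p.2.1 * wt pz p.2.2 :=
      mul_nonneg (mul_nonneg (hwh _) (hwl _)) (hwz _)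
    exact mul_nonneg this (Real.exp_pos _).le
  have step3 : (∑ p : Bool × Bool × Bool, fco ph pl pz t p)^n
      ≤ (Real.exp (-(t^2)/2))^n := by
    apply pow_le_pow_left₀ hfnn
    simpa [← htdef] using coord ph pl pz hl hlh hph hz hpz
  have step4 : (Real.exp (-(t^2)/2))^n
      = Real.exp (-(n * (ph - pl)^2 * (2*pz - 1)^2) / 2) := by
    rw [← Real.exp_nat_mul]
    congr 1
    rw [htdef]; push_cast; ring
  calc _ ≤ _ := step1
    _ = _ := step2
    _ ≤ _ := step3
    _ = _ := step4
end

section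
/- Let s_h, s_l, s_z be independent random vectors in {0,1}^n with independent Bernoulli(p_h), Bernoulli(p_l), Bernoulli(1/2) coordinates respectively. Then Pr(d(s_h, s_z) > d(s_l, s_z)) = Pr(d(s_l, s_z) > d(s_h, s_z)), where d is Hamming distance. -/
/-- If the follower answers uniformly at random (competence `1/2`), she is equally
likely to be strictly closer to either leader:
`Pr(d(s_h, s_z) > d(s_l, s_z)) = Pr(d(s_l, s_z) > d(s_h, s_z))`. -/
theorem stmt5 (n : ℕ) (ph pl : ℝ) (hh : ph ∈ Set.Icc (0:ℝ) 1) (hl : pl ∈ Set.Icc (0:ℝ) 1) :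
    ∑ x : Fin n → Bool, ∑ y : Fin n → Bool, ∑ z : Fin n → Bool,
      wtv ph x * wtv pl y * wtv (1/2) z *
        (if hammingDist y z < hammingDist x z then (1:ℝ) else 0)
    = ∑ x : Fin n → Bool, ∑ y : Fin n → Bool, ∑ z : Fin n → Bool,
        wtv ph x * wtv pl y * wtv (1/2) z *
          (if hammingDist x z < hammingDist y z then (1:ℝ) else 0) := by
  apply Finset.sum_congr rfl; intro x _
  apply Finset.sum_congr rfl; intro y _
  have hw : ∀ z : Fin n → Bool, wtv ((1:ℝ)/2) z = (1/2)^n := by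
    intro z
    calc wtv ((1:ℝ)/2) z = ∏ _i : Fin n, ((1:ℝ)/2) :=
          Finset.prod_congr rfl (fun i _ => by cases z i <;> norm_num [wtv, wt])
      _ = (1/2)^n := by simp
  have hinv : Function.Involutive
      (fun (z : Fin n → Bool) => fun i => xor (x i) (xor (y i) (z i))) := by
    intro z; funext i
    show xor (x i) (xor (y i) (xor (x i) (xor (y i) (z i)))) = z i
    cases x i <;> cases y i <;> cases z i <;> rfl
  refine Fintype.sum_equiv (hinv.toPerm _) _ _ ?_
  intro z
  have hd1 : hammingDist x (fun i => xor (x i) (xor (y i) (z i))) = hammingDist y z := by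
    simp only [hammingDist]
    congr 1
    ext i
    simp only [Finset.mem_filter]
    cases x i <;> cases y i <;> cases z i <;> simp
  have hd2 : hammingDist y (fun i => xor (x i) (xor (y i) (z i))) = hammingDist x z := by
    simp only [hammingDist]
    congr 1
    ext i
    simp only [Finset.mem_filter]
    cases x i <;> cases y i <;> cases z i <;> simp
  simp only [Function.Involutive.coe_toPerm, hd1, hd2, hw]
end

section
/- In the follower model with two leaders of competences p_h > p_l > 1/2 and a follower of competence p_z > 1/2, Pr(d(s_h, s_z) ≥ d(s_l, s_z)) → 0 as n → ∞: with the number of questions tending to infinity, the follower selects the more competent leader with probability tending to 1. -/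
lemma sum_prod_bool {n : ℕ} (f : Fin n → Bool → ℝ) :
    ∑ x : Fin n → Bool, ∏ i, f i (x i) = ∏ i, (f i true + f i false) := by
  rw [← Fintype.piFinset_univ, ← Finset.prod_univ_sum]
  simp

lemma pow_hd {n : ℕ} (t : ℝ) (x z : Fin n → Bool) :
    t ^ hammingDist x z = ∏ i, (if x i = z i then 1 else t) := by
  rw [hammingDist, Finset.prod_ite, Finset.prod_const, Finset.prod_const, one_pow, one_mul]

lemma sum_wtv_pow {n : ℕ} (p t : ℝ) (z : Fin n → Bool) :
    ∑ x : Fin n → Bool, wtv p x * t ^ hammingDist x z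
      = ∏ i, (if z i then p + (1-p)*t else (1-p) + p*t) := by
  have h1 : ∀ x : Fin n → Bool, wtv p x * t ^ hammingDist x z
      = ∏ i, (wt p (x i) * (if x i = z i then 1 else t)) := by
    intro x
    rw [wtv, pow_hd, Finset.prod_mul_distrib]
  rw [Finset.sum_congr rfl (fun x _ => h1 x),
    sum_prod_bool (fun i b => wt p b * (if b = z i then 1 else t))]
  apply Finset.prod_congr rfl
  intro i _
  cases hzi : z i <;> simp [wt, hzi] <;> ring

lemma swap3 {n : ℕ} (F : (Fin n → Bool) → (Fin n → Bool) → (Fin n → Bool) → ℝ) :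
    ∑ x : Fin n → Bool, ∑ y : Fin n → Bool, ∑ z : Fin n → Bool, F x y z
    = ∑ z : Fin n → Bool, ∑ x : Fin n → Bool, ∑ y : Fin n → Bool, F x y z := by
  calc ∑ x : Fin n → Bool, ∑ y : Fin n → Bool, ∑ z : Fin n → Bool, F x y z
      = ∑ x : Fin n → Bool, ∑ z : Fin n → Bool, ∑ y : Fin n → Bool, F x y z :=
        Finset.sum_congr rfl (fun x _ => Finset.sum_comm)
    _ = ∑ z : Fin n → Bool, ∑ x : Fin n → Bool, ∑ y : Fin n → Bool, F x y z :=
        Finset.sum_comm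

lemma T_eq {n : ℕ} (ph pl pz t s : ℝ) :
    ∑ x : Fin n → Bool, ∑ y : Fin n → Bool, ∑ z : Fin n → Bool,
      wtv ph x * wtv pl y * wtv pz z * (t ^ hammingDist x z * s ^ hammingDist y z)
    = (pz * ((ph + (1-ph)*t) * (pl + (1-pl)*s))
        + (1-pz) * (((1-ph) + ph*t) * ((1-pl) + pl*s))) ^ n := by
  rw [swap3]
  have hz : ∀ z : Fin n → Bool,
      (∑ x : Fin n → Bool, ∑ y : Fin n → Bool,
        wtv ph x * wtv pl y * wtv pz z * (t ^ hammingDist x z * s ^ hammingDist y z))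
      = ∏ i, (wt pz (z i) * ((if z i then ph + (1-ph)*t else (1-ph) + ph*t)
          * (if z i then pl + (1-pl)*s else (1-pl) + pl*s))) := by
    intro z
    have step : (∑ x : Fin n → Bool, ∑ y : Fin n → Bool,
        wtv ph x * wtv pl y * wtv pz z * (t ^ hammingDist x z * s ^ hammingDist y z))
      = wtv pz z * ((∑ x : Fin n → Bool, wtv ph x * t ^ hammingDist x z)
          * (∑ y : Fin n → Bool, wtv pl y * s ^ hammingDist y z)) := by
      rw [Finset.sum_mul_sum, Finset.mul_sum]
      apply Finset.sum_congr rfl; intro x _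
      rw [Finset.mul_sum]
      apply Finset.sum_congr rfl; intro y _
      ring
    rw [step, sum_wtv_pow, sum_wtv_pow, wtv, ← Finset.prod_mul_distrib,
        ← Finset.prod_mul_distrib]
  rw [Finset.sum_congr rfl (fun z _ => hz z),
    sum_prod_bool (fun i b => (wt pz b * ((if b then ph + (1-ph)*t else (1-ph) + ph*t)
          * (if b then pl + (1-pl)*s else (1-pl) + pl*s))))]
  simp only [wt, if_true, if_false]
  norm_num


lemma exists_t (U V : ℝ) (hV : 0 ≤ V) (hUV : V < U) :
    ∃ t : ℝ, 1 < t ∧ U/t + V*t < U + V := by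
  rcases eq_or_lt_of_le hV with hV0 | hVpos
  · exact ⟨2, one_lt_two, by rw [← hV0]; norm_num; linarith⟩
  · have hU : 0 < U := lt_of_le_of_lt hV hUV
    have hUVpos : 1 < U / V := (one_lt_div hVpos).2 hUV
    set s := Real.sqrt (U / V) with hs
    have hs1 : 1 < s := by
      rw [hs, show (1:ℝ) = Real.sqrt 1 by simp]
      exact Real.sqrt_lt_sqrt (by norm_num) hUVpos
    have hs0 : 0 < s := by linarith
    have hsq : s ^ 2 = U / V := Real.sq_sqrt (by positivity)
    have hVs2 : V * s ^ 2 = U := by rw [hsq]; field_simp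
    have hVs : V * s < U := by nlinarith
    refine ⟨s, hs1, ?_⟩
    have h2 : U + V * (s * s) < (U + V) * s := by nlinarith
    calc U/s + V*s = (U + V*(s*s))/s := by field_simp
    _ < U + V := by rw [div_lt_iff₀ hs0]; linarith [h2]

lemma wtv_nonneg {n : ℕ} {p : ℝ} (h0 : 0 ≤ p) (h1 : p ≤ 1) (x : Fin n → Bool) :
    0 ≤ wtv p x :=
  Finset.prod_nonneg fun i _ => wt_nonneg h0 h1 (x i)

/-- As the number of questions `n → ∞`, the probability
`Pr(d(s_h, s_z) ≥ d(s_l, s_z))` that the follower fails to strictly prefer the more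
competent leader tends to `0`. -/
theorem stmt17 (ph pl pz : ℝ) (hl : 1/2 < pl) (hlh : pl < ph) (hph : ph ≤ 1)
    (hz : 1/2 < pz) (hpz : pz ≤ 1) :
    Filter.Tendsto
      (fun n : ℕ => ∑ x : Fin n → Bool, ∑ y : Fin n → Bool, ∑ z : Fin n → Bool,
        wtv ph x * wtv pl y * wtv pz z *
          (if hammingDist y z ≤ hammingDist x z then (1:ℝ) else 0))
      Filter.atTop (nhds 0) := by
  have hph0 : 0 ≤ ph := by linarith
  have hpl0 : 0 ≤ pl := by linarith
  have hpl1 : pl ≤ 1 := by linarith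
  have hpz0 : 0 ≤ pz := by linarith
  -- constants
  set U : ℝ := pz*ph*(1-pl) + (1-pz)*(1-ph)*pl with hUdef
  set V : ℝ := pz*(1-ph)*pl + (1-pz)*ph*(1-pl) with hVdef
  have hVnn : 0 ≤ V := by
    have h1 : 0 ≤ pz*(1-ph)*pl := by
      apply mul_nonneg (mul_nonneg hpz0 (by linarith)) hpl0
    have h2 : 0 ≤ (1-pz)*ph*(1-pl) := by
      apply mul_nonneg (mul_nonneg (by linarith) hph0) (by linarith)
    linarith
  have hVU : V < U := by nlinarith [mul_pos (by linarith : (0:ℝ) < 2*pz-1) (by linarith : (0:ℝ) < ph - pl)]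
  obtain ⟨t, ht1, htlt⟩ := exists_t U V hVnn hVU
  have ht0 : 0 < t := by linarith
  set r : ℝ := pz * ((ph + (1-ph)*t) * (pl + (1-pl)*(1/t)))
      + (1-pz) * (((1-ph) + ph*t) * ((1-pl) + pl*(1/t))) with hrdef
  have hrval : r = (ph*pl + (1-ph)*(1-pl)) + U*(1/t) + V*t := by
    rw [hrdef, hUdef, hVdef]
    field_simp
    ring
  have hCUV : (ph*pl + (1-ph)*(1-pl)) + U + V = 1 := by
    rw [hUdef, hVdef]; ring
  have hr1 : r < 1 := by
    rw [hrval]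
    have : U * (1/t) = U/t := by ring
    rw [this]
    linarith
  have hr0 : 0 ≤ r := by
    rw [hrdef]
    have hit : 0 < 1/t := by positivity
    have h1 : 0 ≤ ph + (1-ph)*t := by nlinarith
    have h2 : 0 ≤ pl + (1-pl)*(1/t) := by nlinarith
    have h3 : 0 ≤ (1-ph) + ph*t := by nlinarith
    have h4 : 0 ≤ (1-pl) + pl*(1/t) := by nlinarith
    exact add_nonneg (mul_nonneg hpz0 (mul_nonneg h1 h2))
      (mul_nonneg (by linarith) (mul_nonneg h3 h4))
  -- squeeze
  apply squeeze_zero (g := fun n => r ^ n)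
  · intro n
    apply Finset.sum_nonneg; intro x _
    apply Finset.sum_nonneg; intro y _
    apply Finset.sum_nonneg; intro z _
    apply mul_nonneg
    apply mul_nonneg (mul_nonneg (wtv_nonneg hph0 hph x) (wtv_nonneg hpl0 hpl1 y))
      (wtv_nonneg hpz0 hpz z)
    split <;> norm_num
  · intro n
    rw [← T_eq (n := n) ph pl pz t (1/t)]
    apply Finset.sum_le_sum; intro x _
    apply Finset.sum_le_sum; intro y _
    apply Finset.sum_le_sum; intro z _
    have hw : 0 ≤ wtv ph x * wtv pl y * wtv pz z :=
      mul_nonneg (mul_nonneg (wtv_nonneg hph0 hph x) (wtv_nonneg hpl0 hpl1 y))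
        (wtv_nonneg hpz0 hpz z)
    apply mul_le_mul_of_nonneg_left _ hw
    split
    · rename_i hle
      have hpow : t ^ hammingDist y z ≤ t ^ hammingDist x z :=
        pow_le_pow_right₀ (le_of_lt ht1) hle
      have hpos : 0 < t ^ hammingDist y z := pow_pos ht0 _
      rw [one_div, inv_pow, ← div_eq_mul_inv]
      rw [le_div_iff₀ hpos, one_mul]
      exact hpow
    · positivity
  · exact tendsto_pow_atTop_nhds_zero_of_lt_one hr0 hr1
end
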